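/- For every integer n ≥ 1, every ε ∈ (0,1], and every u ∈ Λ_n, the determinant of the n×n matrix with (i,j) entry q_1(ε·n̲_i, u_j) is at least 2^{n²} · exp(−‖n̲‖²/2) · ε^{n²} · (∏_{j=1}^n φ_1(u_j)) · (∏_{i=1}^n u_i) · ∏_{1 ≤ j < k ≤ n} (u_j² − u_k²). -/
import Mathlib

/-- `gauss v z` is the one-dimensional centered Gaussian density of variance `v` at `z`. -/
noncomputable def gauss (v z : ℝ) : ℝ :=
  (Real.sqrt (2 * Real.pi * v))⁻¹ * Real.exp (-z ^ 2 / (2 * v))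

/-- `q t x y` is the transition kernel of Brownian motion killed at `0`. -/
noncomputable def q (t x y : ℝ) : ℝ := gauss t (y - x) - gauss t (y + x)

/-- `nvec n i = 2(n-1-i)+1`, i.e. the vector `(2n-1, 2n-3, …, 3, 1)` (0-based index). -/
def nvec (n : ℕ) (i : Fin n) : ℝ := ((2 * (n - 1 - (i : ℕ)) + 1 : ℕ) : ℝ)

/-- `chamber u` says `u` lies in the open Weyl chamber `u 0 > u 1 > … > u (n-1) > 0`. -/
def chamber {n : ℕ} (u : Fin n → ℝ) : Prop :=
  (∀ i j : Fin n, i < j → u j < u i) ∧ ∀ i, 0 < u i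

open Polynomial

noncomputable def QP : ℕ → Polynomial ℝ
  | 0 => 1
  | 1 => Polynomial.X + Polynomial.C (1/2)
  | (k+2) => Polynomial.X * QP (k+1) - Polynomial.C (1/4) * QP k

theorem QP_monic_deg : ∀ k : ℕ, (QP k).Monic ∧ (QP k).natDegree = k := by
  intro k
  induction k using Nat.twoStepInduction with
  | zero => exact ⟨monic_one, by simp [QP]⟩
  | one =>
    refine ⟨by simpa [QP] using monic_X_add_C (1/2 : ℝ), ?_⟩
    simpa [QP] using natDegree_X_add_C (1/2 : ℝ)
  | more k ih0 ih1 =>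
    obtain ⟨hm1, hd1⟩ := ih1
    obtain ⟨hm0, hd0⟩ := ih0
    have hmul : (Polynomial.X * QP (k+1)).Monic := monic_X.mul hm1
    have hdmul : (Polynomial.X * QP (k+1)).natDegree = k + 2 := by
      rw [natDegree_X_mul hm1.ne_zero, hd1]
    have hX : (Polynomial.X * QP (k+1)).degree = ((k+2 : ℕ) : WithBot ℕ) := by
      rw [degree_eq_natDegree hmul.ne_zero, hdmul]
    have hC : (Polynomial.C (1/4 : ℝ) * QP k).degree ≤ ((k : ℕ) : WithBot ℕ) := by
      refine le_trans (degree_mul_le _ _) ?_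
      have h1 : (Polynomial.C (1/4 : ℝ)).degree ≤ 0 := degree_C_le
      have h2 : (QP k).degree ≤ ((k : ℕ) : WithBot ℕ) := degree_le_natDegree.trans (by rw [hd0])
      calc (Polynomial.C (1/4 : ℝ)).degree + (QP k).degree ≤ 0 + ((k:ℕ) : WithBot ℕ) :=
            add_le_add h1 h2
        _ = ((k:ℕ) : WithBot ℕ) := zero_add _
    have hdeglt : (Polynomial.C (1/4 : ℝ) * QP k).degree < (Polynomial.X * QP (k+1)).degree := by
      refine hC.trans_lt ?_
      rw [hX]
      exact_mod_cast Nat.lt_succ_of_lt (Nat.lt_succ_self k)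
    have hsub : (QP (k+2)).Monic := by
      show (Polynomial.X * QP (k+1) - Polynomial.C (1/4) * QP k).Monic
      exact hmul.sub_of_left hdeglt
    refine ⟨hsub, ?_⟩
    show (Polynomial.X * QP (k+1) - Polynomial.C (1/4) * QP k).natDegree = k + 2
    rw [natDegree_sub_eq_left_of_natDegree_lt, hdmul]
    rw [hdmul]
    calc (Polynomial.C (1/4 : ℝ) * QP k).natDegree ≤ 0 + (QP k).natDegree :=
          natDegree_mul_le.trans (by simp)
      _ < k + 2 := by omega

theorem sinh_cosh_prod (s t : ℝ) :
    Real.cosh (s + t) - Real.cosh (s - t) = 2 * Real.sinh s * Real.sinh t := by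
  rw [Real.cosh_add, Real.cosh_sub]; ring

theorem QP_eval : ∀ (k : ℕ) (θ : ℝ),
    Real.sinh ((2 * (k : ℝ) + 1) * θ) =
      2 ^ k * Real.sinh θ * (QP k).eval (Real.cosh (2 * θ)) := by
  intro k
  induction k using Nat.twoStepInduction with
  | zero => intro θ; simp [QP]
  | one =>
    intro θ
    have h3 : (2 * (1 : ℝ) + 1) * θ = 2 * θ + θ := by ring
    have hc : Real.cosh θ ^ 2 = (Real.cosh (2 * θ) + 1) / 2 := by
      rw [Real.cosh_two_mul]
      have := Real.cosh_sq_sub_sinh_sq θ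
      nlinarith
    push_cast
    rw [h3, Real.sinh_add, Real.sinh_two_mul]
    simp only [QP, Polynomial.eval_add, Polynomial.eval_X, Polynomial.eval_C]
    linear_combination (2 * Real.sinh θ) * hc
  | more k ih0 ih1 =>
    intro θ
    have key : Real.sinh ((2 * ((k:ℝ)+2) + 1) * θ) =
        2 * Real.cosh (2*θ) * Real.sinh ((2 * ((k:ℝ)+1) + 1) * θ)
          - Real.sinh ((2 * (k:ℝ) + 1) * θ) := by
      have hA : (2 * ((k:ℝ)+2) + 1) * θ = (2 * ((k:ℝ)+1) + 1) * θ + 2*θ := by ring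
      have hB : (2 * ((k:ℝ)) + 1) * θ = (2 * ((k:ℝ)+1) + 1) * θ - 2*θ := by ring
      rw [hA, hB, Real.sinh_add, Real.sinh_sub]
      ring
    have e1 := ih1 θ
    have e0 := ih0 θ
    push_cast at e1 e0 ⊢
    rw [key, e1, e0]
    show _ = 2 ^ (k+2) * Real.sinh θ *
      (Polynomial.X * QP (k+1) - Polynomial.C (1/4) * QP k).eval (Real.cosh (2 * θ))
    simp only [Polynomial.eval_sub, Polynomial.eval_mul, Polynomial.eval_X, Polynomial.eval_C]
    ring

theorem prod_Ioi_rev {n : ℕ} (f : Fin n → Fin n → ℝ) :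
    (∏ i, ∏ j ∈ Finset.Ioi i, f (Fin.rev j) (Fin.rev i)) =
      ∏ i, ∏ j ∈ Finset.Ioi i, f i j := by
  rw [Finset.prod_sigma', Finset.prod_sigma']
  refine Finset.prod_nbij' (fun p => ⟨Fin.rev p.2, Fin.rev p.1⟩)
    (fun p => ⟨Fin.rev p.2, Fin.rev p.1⟩) ?_ ?_ ?_ ?_ ?_
  · rintro ⟨i, j⟩ h
    simp only [Finset.mem_sigma, Finset.mem_univ, Finset.mem_Ioi, true_and] at h ⊢
    exact Fin.rev_lt_rev.mpr h
  · rintro ⟨i, j⟩ h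
    simp only [Finset.mem_sigma, Finset.mem_univ, Finset.mem_Ioi, true_and] at h ⊢
    exact Fin.rev_lt_rev.mpr h
  · rintro ⟨i, j⟩ _; simp
  · rintro ⟨i, j⟩ _; simp
  · rintro ⟨i, j⟩ _; simp

theorem det_Q_eval (n : ℕ) (c : Fin n → ℝ) :
    Matrix.det (Matrix.of fun i j : Fin n => (QP (n - 1 - (i:ℕ))).eval (c j)) =
      ∏ i : Fin n, ∏ j ∈ Finset.Ioi i, (c i - c j) := by
  have hvand := Matrix.det_eval_matrixOfPolynomials_eq_det_vandermonde
    (fun i : Fin n => c (Fin.rev i)) (fun i : Fin n => QP (i : ℕ))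
    (fun i => (QP_monic_deg i).2) (fun i => (QP_monic_deg i).1)
  have hsub : Matrix.det ((Matrix.of fun i j : Fin n =>
        (QP (n - 1 - (i:ℕ))).eval (c j)).submatrix Fin.revPerm Fin.revPerm) =
      Matrix.det (Matrix.of fun i j : Fin n => (QP (n - 1 - (i:ℕ))).eval (c j)) :=
    Matrix.det_submatrix_equiv_self _ _
  rw [← hsub]
  have heq : ((Matrix.of fun i j : Fin n => (QP (n - 1 - (i:ℕ))).eval (c j)).submatrix
      Fin.revPerm Fin.revPerm) =
      (Matrix.of fun i j : Fin n => (QP (j : ℕ)).eval (c (Fin.rev i))).transpose := by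
    ext i j
    simp only [Matrix.submatrix_apply, Matrix.of_apply, Matrix.transpose_apply,
      Equiv.coe_fn_mk, Fin.val_rev]
    congr 2
    · simp only [Fin.revPerm_apply, Fin.val_rev]
      omega
  rw [heq, Matrix.det_transpose, ← hvand, Matrix.det_vandermonde]
  rw [← prod_Ioi_rev (fun a b => c a - c b)]

theorem q_one_eq (x y : ℝ) :
    q 1 x y = (2 * Real.exp (-x^2/2)) * (gauss 1 y * Real.sinh (x*y)) := by
  unfold q gauss
  rw [Real.sinh_eq]
  have e1 : -(y - x)^2/(2*(1:ℝ)) = (-x^2/2) + (-y^2/(2*(1:ℝ)) + x*y) := by ring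
  have e2 : -(y + x)^2/(2*(1:ℝ)) = (-x^2/2) + (-y^2/(2*(1:ℝ)) + -(x*y)) := by ring
  rw [e1, e2, Real.exp_add, Real.exp_add, Real.exp_add, Real.exp_add]
  ring

theorem pair_bound {a b : ℝ} (hb : 0 ≤ b) (hab : b ≤ a) :
    2 * (a^2 - b^2) ≤ Real.cosh (2*a) - Real.cosh (2*b) := by
  have h := sinh_cosh_prod (a+b) (a-b)
  have h1 : a + b ≤ Real.sinh (a+b) := Real.self_le_sinh_iff.mpr (by linarith)
  have h2 : a - b ≤ Real.sinh (a-b) := Real.self_le_sinh_iff.mpr (by linarith)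
  have hs : (a+b) + (a-b) = 2*a := by ring
  have hd : (a+b) - (a-b) = 2*b := by ring
  rw [hs, hd] at h
  rw [h]
  have hab2 : (0:ℝ) ≤ a + b := by linarith
  have hab3 : (0:ℝ) ≤ a - b := by linarith
  nlinarith

theorem det_q_fact (n : ℕ) (ε : ℝ) (u : Fin n → ℝ) :
    Matrix.det (Matrix.of fun i j : Fin n => q 1 (ε * nvec n i) (u j)) =
      (∏ i, (2 * Real.exp (-(ε * nvec n i)^2/2))) * ((∏ j, gauss 1 (u j)) *
        ((∏ i : Fin n, (2:ℝ)^((n - 1 - (i:ℕ)))) * ((∏ j, Real.sinh (ε * u j)) *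
          ∏ i : Fin n, ∏ j ∈ Finset.Ioi i,
            (Real.cosh (2*(ε * u i)) - Real.cosh (2*(ε * u j)))))) := by
  set A : Matrix (Fin n) (Fin n) ℝ :=
    Matrix.of fun i j : Fin n => (QP (n - 1 - (i:ℕ))).eval (Real.cosh (2 * (ε * u j))) with hA
  set B : Matrix (Fin n) (Fin n) ℝ :=
    Matrix.of fun i j : Fin n => Real.sinh (ε * u j) * A i j with hB
  set S : Matrix (Fin n) (Fin n) ℝ :=
    Matrix.of fun i j : Fin n => (2:ℝ)^((n - 1 - (i:ℕ))) * B i j with hS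
  set N : Matrix (Fin n) (Fin n) ℝ :=
    Matrix.of fun i j : Fin n => gauss 1 (u j) * S i j with hN
  have hM : (Matrix.of fun i j : Fin n => q 1 (ε * nvec n i) (u j)) =
      Matrix.of fun i j => (2 * Real.exp (-(ε * nvec n i)^2/2)) * N i j := by
    ext i j
    simp only [Matrix.of_apply, hN, hS, hB, hA]
    rw [q_one_eq]
    have harg : (ε * nvec n i) * u j = (2 * ((n - 1 - (i:ℕ) : ℕ) : ℝ) + 1) * (ε * u j) := by
      unfold nvec
      push_cast
      ring
    rw [harg, QP_eval]
    ring
  rw [hM, Matrix.det_mul_column, hN, Matrix.det_mul_row, hS, Matrix.det_mul_column, hB,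
    Matrix.det_mul_row, hA, det_Q_eval]

theorem gauss_pos (z : ℝ) : 0 < gauss 1 z := by
  unfold gauss
  have h2 : 0 < Real.sqrt (2 * Real.pi * 1) :=
    Real.sqrt_pos.mpr (by positivity)
  positivity

theorem sum_card_Ioi (n : ℕ) :
    (∑ i : Fin n, (Finset.Ioi i).card) = ∑ i : Fin n, (n - 1 - (i:ℕ)) := by
  refine Finset.sum_congr rfl fun i _ => ?_
  rw [Fin.card_Ioi]

theorem hn2_lemma (n : ℕ) (hn : 1 ≤ n) :
    n ^ 2 = n + 2 * ∑ i : Fin n, (n - 1 - (i:ℕ)) := by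
  have h1 : (∑ i : Fin n, (n - 1 - (i:ℕ))) = ∑ i ∈ Finset.range n, (n - 1 - i) :=
    Fin.sum_univ_eq_sum_range _ _
  have h2 : (∑ i ∈ Finset.range n, (n - 1 - i)) = ∑ i ∈ Finset.range n, i := by
    rw [← Finset.sum_range_reflect]
    exact Finset.sum_congr rfl fun j hj => by
      have := Finset.mem_range.mp hj; omega
  have h3 : (∑ i ∈ Finset.range n, i) * 2 = n * (n - 1) := Finset.sum_range_id_mul_two n
  obtain ⟨m, rfl⟩ : ∃ m, n = m + 1 := ⟨n - 1, by omega⟩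
  rw [h1, h2]
  have : (∑ i ∈ Finset.range (m+1), i) * 2 = (m+1) * m := by
    rw [h3]; simp
  have hsq : (m+1)^2 = (m+1)*m + (m+1) := by ring
  omega

/-- Lower bound on the Karlin–McGregor kernel at time `1` from `ε • n̲` to a point `u`
of the open Weyl chamber. -/
theorem stmt9 (n : ℕ) (hn : 1 ≤ n) (ε : ℝ) (hε : ε ∈ Set.Ioc (0 : ℝ) 1)
    (u : Fin n → ℝ) (hu : chamber u) :
    2 ^ (n ^ 2) * Real.exp (-(∑ i, nvec n i ^ 2) / 2) * ε ^ (n ^ 2) *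
        (∏ j, gauss 1 (u j)) * (∏ i, u i) *
        ∏ j, ∏ k ∈ Finset.Ioi j, ((u j) ^ 2 - (u k) ^ 2) ≤
      Matrix.det (Matrix.of fun i j : Fin n => q 1 (ε * nvec n i) (u j)) := by
  obtain ⟨hε0, hε1⟩ := hε
  obtain ⟨hord, hpos⟩ := hu
  set P : ℕ := ∑ i : Fin n, (n - 1 - (i:ℕ)) with hPdef
  have hn2 : n ^ 2 = n + 2 * P := hn2_lemma n hn
  rw [det_q_fact]
  set E : ℝ := Real.exp (-(∑ i, nvec n i ^ 2) / 2) with hE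
  set G : ℝ := ∏ j, gauss 1 (u j) with hG
  set U : ℝ := ∏ i, u i with hU
  set D : ℝ := ∏ j, ∏ k ∈ Finset.Ioi j, ((u j) ^ 2 - (u k) ^ 2) with hD
  -- rewrite LHS
  have hprod1 : (∏ j, (ε * u j)) = ε ^ n * U := by
    rw [Finset.prod_mul_distrib, Finset.prod_const, Finset.card_univ, Fintype.card_fin, hU]
  have hprod2 : (∏ i : Fin n, ∏ j ∈ Finset.Ioi i, (2*ε^2*((u i)^2 - (u j)^2)))
      = (2*ε^2)^P * D := by
    have : ∀ i : Fin n, (∏ j ∈ Finset.Ioi i, (2*ε^2*((u i)^2 - (u j)^2)))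
        = (2*ε^2)^((n - 1 - (i:ℕ))) * ∏ j ∈ Finset.Ioi i, ((u i)^2 - (u j)^2) := by
      intro i
      rw [Finset.prod_mul_distrib, Finset.prod_const, Fin.card_Ioi]
    rw [Finset.prod_congr rfl (fun i _ => this i), Finset.prod_mul_distrib,
      Finset.prod_pow_eq_pow_sum, hD, hPdef]
  have hT : (∏ i : Fin n, (2:ℝ)^((n - 1 - (i:ℕ)))) = 2 ^ P := by
    rw [Finset.prod_pow_eq_pow_sum, hPdef]
  have hLHS : 2 ^ (n ^ 2) * E * ε ^ (n ^ 2) * G * U * D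
      = (2^n * E) * (G * ((2:ℝ)^P * ((∏ j, (ε * u j)) *
          ∏ i : Fin n, ∏ j ∈ Finset.Ioi i, (2*ε^2*((u i)^2 - (u j)^2))))) := by
    rw [hprod1, hprod2, hn2]
    ring
  rw [hLHS, hT]
  -- componentwise facts
  have huij : ∀ i j : Fin n, i < j → 0 < (u i)^2 - (u j)^2 := by
    intro i j hij
    have h1 := hord i j hij
    have h2 := hpos j
    nlinarith
  have hF1 : 2^n * E ≤ ∏ i, (2 * Real.exp (-(ε * nvec n i)^2/2)) := by
    rw [Finset.prod_mul_distrib, Finset.prod_const, Finset.card_univ, Fintype.card_fin,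
      ← Real.exp_sum]
    have hs : -(∑ i, nvec n i ^ 2) / 2 ≤ ∑ i, -(ε * nvec n i)^2/2 := by
      have h1 : -(∑ i, nvec n i ^ 2) / 2 = ∑ i, -(nvec n i ^2)/2 := by
        rw [← Finset.sum_div, ← Finset.sum_neg_distrib]
      rw [h1]
      refine Finset.sum_le_sum fun i _ => ?_
      have he2 : ε^2 ≤ 1 := by nlinarith
      have : (ε * nvec n i)^2 ≤ nvec n i ^ 2 := by
        calc (ε * nvec n i)^2 = ε^2 * nvec n i ^2 := by ring
          _ ≤ 1 * nvec n i ^ 2 := mul_le_mul_of_nonneg_right he2 (sq_nonneg _)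
          _ = nvec n i ^ 2 := one_mul _
      linarith
    have h2n : (0:ℝ) ≤ 2^n := by positivity
    exact mul_le_mul_of_nonneg_left (by rw [hE]; exact Real.exp_le_exp.mpr hs) h2n
  have hX1 : (∏ j, (ε * u j)) ≤ ∏ j, Real.sinh (ε * u j) := by
    refine Finset.prod_le_prod (fun j _ => ?_) (fun j _ => ?_)
    · exact le_of_lt (mul_pos hε0 (hpos j))
    · exact Real.self_le_sinh_iff.mpr (le_of_lt (mul_pos hε0 (hpos j)))
  have hX2 : (∏ i : Fin n, ∏ j ∈ Finset.Ioi i, (2*ε^2*((u i)^2 - (u j)^2)))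
      ≤ ∏ i : Fin n, ∏ j ∈ Finset.Ioi i,
          (Real.cosh (2*(ε * u i)) - Real.cosh (2*(ε * u j))) := by
    refine Finset.prod_le_prod (fun i _ => Finset.prod_nonneg fun j hj => ?_)
      (fun i _ => Finset.prod_le_prod (fun j hj => ?_) (fun j hj => ?_))
    · have := huij i j (Finset.mem_Ioi.mp hj)
      have h2 : (0:ℝ) ≤ 2*ε^2 := by positivity
      exact mul_nonneg h2 this.le
    · have := huij i j (Finset.mem_Ioi.mp hj)
      have h2 : (0:ℝ) ≤ 2*ε^2 := by positivity
      exact mul_nonneg h2 this.le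
    · have hij := Finset.mem_Ioi.mp hj
      have hb : 0 ≤ ε * u j := le_of_lt (mul_pos hε0 (hpos j))
      have hab : ε * u j ≤ ε * u i :=
        mul_le_mul_of_nonneg_left (hord i j hij).le hε0.le
      have := pair_bound hb hab
      calc 2*ε^2*((u i)^2 - (u j)^2) = 2*((ε*u i)^2 - (ε*u j)^2) := by ring
        _ ≤ Real.cosh (2*(ε * u i)) - Real.cosh (2*(ε * u j)) := this
  -- nonnegativity
  have hGnn : 0 ≤ G := by
    rw [hG]; exact Finset.prod_nonneg fun j _ => (gauss_pos (u j)).le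
  have hY1nn : 0 ≤ ∏ j, Real.sinh (ε * u j) :=
    Finset.prod_nonneg fun j _ => le_trans (le_of_lt (mul_pos hε0 (hpos j)))
      (Real.self_le_sinh_iff.mpr (le_of_lt (mul_pos hε0 (hpos j))))
  have hX2nn : 0 ≤ ∏ i : Fin n, ∏ j ∈ Finset.Ioi i, (2*ε^2*((u i)^2 - (u j)^2)) := by
    refine Finset.prod_nonneg fun i _ => Finset.prod_nonneg fun j hj => ?_
    have := huij i j (Finset.mem_Ioi.mp hj)
    have h2 : (0:ℝ) ≤ 2*ε^2 := by positivity
    exact mul_nonneg h2 this.le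
  have hX1nn : 0 ≤ ∏ j, (ε * u j) :=
    Finset.prod_nonneg fun j _ => le_of_lt (mul_pos hε0 (hpos j))
  have hF1nn : 0 ≤ ∏ i, (2 * Real.exp (-(ε * nvec n i)^2/2)) :=
    Finset.prod_nonneg fun i _ => by positivity
  have h2P : (0:ℝ) ≤ 2^P := by positivity
  -- assemble
  refine mul_le_mul hF1 ?_ ?_ hF1nn
  · refine mul_le_mul_of_nonneg_left ?_ hGnn
    refine mul_le_mul_of_nonneg_left ?_ h2P
    exact mul_le_mul hX1 hX2 hX2nn hY1nn
  · exact mul_nonneg hGnn (mul_nonneg h2P (mul_nonneg hX1nn hX2nn))
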